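/- Let R be a commutative ring, n ≥ 3, and H a subgroup of GL_N(R) (N = C(n,m)) containing ⋀^m E_n(R). For I ≠ J in ⋀^m[n], set A_{I,J} = {ξ ∈ R : t_{I,J}(ξ) ∈ H}. Then each A_{I,J} is an additive subgroup of R closed under multiplication by squares of units of R; in particular 0 ∈ A_{I,J} and A_{I,J} is closed under addition and negation. -/

import Mathlib

open Matrix Finset

section Aux

theorem image_orderEmbOfFin' {n m : ℕ} (s : Finset (Fin n)) (hs : s.card = m) :
    Finset.univ.image (fun i => s.orderEmbOfFin hs i) = s := by
  ext y
  simp only [mem_image, mem_univ, true_and]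
  constructor
  · rintro ⟨x, rfl⟩; exact Finset.orderEmbOfFin_mem _ _ _
  · intro hy
    have : y ∈ Set.range (s.orderEmbOfFin hs) := by
      rw [Finset.range_orderEmbOfFin]; exact hy
    obtain ⟨x, hx⟩ := this
    exact ⟨x, hx⟩

theorem image_orderEmbOfFin_perm' {n m : ℕ} (s : Finset (Fin n)) (hs : s.card = m)
    (σ : Equiv.Perm (Fin m)) :
    Finset.univ.image (fun i => s.orderEmbOfFin hs (σ i)) = s := by
  rw [show (fun i => s.orderEmbOfFin hs (σ i))
      = (fun i => s.orderEmbOfFin hs i) ∘ σ from rfl,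
    ← Finset.image_image, Finset.image_univ_equiv, image_orderEmbOfFin']

theorem myCauchyBinet {R : Type*} [CommRing R] {m n : ℕ}
    (A : Matrix (Fin m) (Fin n) R) (B : Matrix (Fin n) (Fin m) R) :
    (A * B).det = ∑ K : {s : Finset (Fin n) // s.card = m},
      (A.submatrix id (K.1.orderEmbOfFin K.2)).det *
        (B.submatrix (K.1.orderEmbOfFin K.2) id).det := by
  classical
  have h1 : (A * B).det
      = ∑ r : Fin m → Fin n, (∏ i, A i (r i)) • (B.submatrix r id).det := by
    have hrows : (fun i : Fin m => (A * B) i) = fun i => ∑ k, A i k • B k := by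
      ext i j
      simp [Matrix.mul_apply, Finset.sum_apply]
    calc (A * B).det = Matrix.detRowAlternating (fun i : Fin m => (A * B) i) := rfl
      _ = Matrix.detRowAlternating (fun i : Fin m => ∑ k, A i k • B k) := by rw [hrows]
      _ = ∑ r : Fin m → Fin n,
            Matrix.detRowAlternating (fun i => A i (r i) • B (r i)) := by
          exact Matrix.detRowAlternating.toMultilinearMap.map_sum (fun i k => A i k • B k)
      _ = ∑ r : Fin m → Fin n, (∏ i, A i (r i)) • (B.submatrix r id).det := by
          refine Finset.sum_congr rfl fun r _ => ?_
          exact Matrix.detRowAlternating.toMultilinearMap.map_smul_univ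
            (fun i => A i (r i)) (fun i => B (r i))
  rw [h1, ← Finset.sum_filter_add_sum_filter_not Finset.univ
      (fun r : Fin m → Fin n => Function.Injective r)]
  have hzero : ∑ r ∈ Finset.univ.filter
      (fun r : Fin m → Fin n => ¬ Function.Injective r),
      (∏ i, A i (r i)) • (B.submatrix r id).det = 0 := by
    refine Finset.sum_eq_zero fun r hr => ?_
    simp only [mem_filter, mem_univ, true_and] at hr
    obtain ⟨a, b, hab, hne⟩ := Function.not_injective_iff.mp hr
    have : (B.submatrix r id).det = 0 :=
      Matrix.det_zero_of_row_eq hne (funext fun k => by simp [hab])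
    rw [this, smul_zero]
  rw [hzero, add_zero]
  have key : ∑ p : {s : Finset (Fin n) // s.card = m} × Equiv.Perm (Fin m),
      (∏ i, A i (p.1.1.orderEmbOfFin p.1.2 (p.2 i))) •
        (B.submatrix (fun i => p.1.1.orderEmbOfFin p.1.2 (p.2 i)) id).det
      = ∑ r ∈ Finset.univ.filter (fun r : Fin m → Fin n => Function.Injective r),
        (∏ i, A i (r i)) • (B.submatrix r id).det := by
    refine Finset.sum_bij (fun p _ => fun i => p.1.1.orderEmbOfFin p.1.2 (p.2 i))
      ?_ ?_ ?_ ?_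
    · intro p _
      simp only [mem_filter, mem_univ, true_and]
      exact (p.1.1.orderEmbOfFin p.1.2).injective.comp p.2.injective
    · rintro ⟨K, σ⟩ _ ⟨L, τ⟩ _ h
      simp only at h
      have hKL : K = L := by
        have h1 := congrArg (fun r : Fin m → Fin n => Finset.univ.image r) h
        rw [image_orderEmbOfFin_perm', image_orderEmbOfFin_perm'] at h1
        exact Subtype.ext h1
      subst hKL
      have hστ : σ = τ := by
        ext x
        exact congrArg Fin.val ((K.1.orderEmbOfFin K.2).injective (congrFun h x))
      rw [hστ]
    · intro r hr
      simp only [mem_filter, mem_univ, true_and] at hr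
      have hcard : (Finset.univ.image r).card = m := by
        rw [Finset.card_image_of_injective _ hr, Finset.card_univ, Fintype.card_fin]
      set K : {s : Finset (Fin n) // s.card = m} := ⟨Finset.univ.image r, hcard⟩ with hK
      have hmem : ∀ x, r x ∈ Finset.univ.image r := fun x =>
        Finset.mem_image_of_mem r (Finset.mem_univ x)
      set g : Fin m → Fin m := fun x =>
        ((Finset.univ.image r).orderIsoOfFin hcard).symm ⟨r x, hmem x⟩ with hg
      have hginj : Function.Injective g := by
        intro a b hab
        apply hr
        have := congrArg (fun z => (((Finset.univ.image r).orderIsoOfFin hcard) z : Fin n)) hab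
        simpa [hg] using this
      refine ⟨⟨K, Equiv.ofBijective g (Finite.injective_iff_bijective.mp hginj)⟩,
        Finset.mem_univ _, ?_⟩
      funext x
      simp only [Equiv.ofBijective_apply, hg]
      exact congrArg Subtype.val
        (((Finset.univ.image r).orderIsoOfFin hcard).apply_symm_apply ⟨r x, hmem x⟩)
    · intro p _
      rfl
  rw [← key, Fintype.sum_prod_type]
  refine Finset.sum_congr rfl fun K _ => ?_
  have hA : (A.submatrix id (K.1.orderEmbOfFin K.2)).det
      = ∑ σ : Equiv.Perm (Fin m),
          Equiv.Perm.sign σ • ∏ i, A i (K.1.orderEmbOfFin K.2 (σ i)) := by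
    rw [← Matrix.det_transpose, Matrix.det_apply]
    refine Finset.sum_congr rfl fun σ _ => ?_
    congr 1
  rw [hA, Finset.sum_mul]
  refine Finset.sum_congr rfl fun σ _ => ?_
  have hB : (B.submatrix (fun i => K.1.orderEmbOfFin K.2 (σ i)) id).det
      = Equiv.Perm.sign σ • (B.submatrix (K.1.orderEmbOfFin K.2) id).det := by
    have : B.submatrix (fun i => K.1.orderEmbOfFin K.2 (σ i)) id
        = (B.submatrix (K.1.orderEmbOfFin K.2) id).submatrix σ id := rfl
    rw [this, Matrix.det_permute]
    simp [Units.smul_def, zsmul_eq_mul]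
  rw [hB]
  simp only [Units.smul_def, zsmul_eq_mul, smul_eq_mul]
  ring

end Aux

/-- The `m`-th compound (exterior power) matrix of `g`: rows and columns are
indexed by `m`-element subsets of `{1,…,n}`, and the `(I,J)`-entry is the
corresponding `m × m` minor of `g`.  This is the matrix of `⋀^m g` in the
standard basis of `⋀^m R^n`. -/
def extMatrix (R : Type*) [CommRing R] (n m : ℕ) (g : Matrix (Fin n) (Fin n) R) :
    Matrix {s : Finset (Fin n) // s.card = m} {s : Finset (Fin n) // s.card = m} R :=
  fun I J =>
    (g.submatrix (fun a => I.1.orderEmbOfFin I.2 a) (fun b => J.1.orderEmbOfFin J.2 b)).det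

section ExtAux

theorem extMatrix_mul (R : Type*) [CommRing R] (n m : ℕ)
    (g h : Matrix (Fin n) (Fin n) R) :
    extMatrix R n m (g * h) = extMatrix R n m g * extMatrix R n m h := by
  ext I J
  rw [Matrix.mul_apply]
  show ((g * h).submatrix _ _).det = _
  have hsub : (g * h).submatrix (fun a => I.1.orderEmbOfFin I.2 a)
        (fun b => J.1.orderEmbOfFin J.2 b)
      = (g.submatrix (fun a => I.1.orderEmbOfFin I.2 a) id)
        * (h.submatrix id (fun b => J.1.orderEmbOfFin J.2 b)) := by
    ext a b
    simp [Matrix.mul_apply]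
  rw [hsub, myCauchyBinet]
  refine Finset.sum_congr rfl fun K _ => ?_
  rw [Matrix.submatrix_submatrix, Matrix.submatrix_submatrix]
  rfl

theorem extMatrix_diagonal (R : Type*) [CommRing R] (n m : ℕ) (d : Fin n → R) :
    extMatrix R n m (Matrix.diagonal d)
      = Matrix.diagonal
          (fun K : {s : Finset (Fin n) // s.card = m} => ∏ x ∈ K.1, d x) := by
  ext K L
  by_cases h : K = L
  · subst h
    rw [Matrix.diagonal_apply_eq]
    show ((Matrix.diagonal d).submatrix _ _).det = _
    have hsub : (Matrix.diagonal d).submatrix (fun a => K.1.orderEmbOfFin K.2 a)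
          (fun b => K.1.orderEmbOfFin K.2 b)
        = Matrix.diagonal (fun i => d (K.1.orderEmbOfFin K.2 i)) := by
      ext a b
      by_cases hab : a = b
      · subst hab; simp
      · rw [Matrix.submatrix_apply, Matrix.diagonal_apply_ne _
            (fun hc => hab ((K.1.orderEmbOfFin K.2).injective hc)),
          Matrix.diagonal_apply_ne _ hab]
    rw [hsub, Matrix.det_diagonal]
    have : ∏ x ∈ K.1, d x = ∏ i : Fin m, d (K.1.orderEmbOfFin K.2 i) := by
      conv_lhs => rw [← image_orderEmbOfFin' K.1 K.2]
      exact Finset.prod_image (fun a _ b _ hab => (K.1.orderEmbOfFin K.2).injective hab)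
    rw [this]
  · rw [Matrix.diagonal_apply_ne _ h]
    show ((Matrix.diagonal d).submatrix _ _).det = 0
    have hKL : K.1 ≠ L.1 := fun hc => h (Subtype.ext hc)
    have hex : ∃ x ∈ K.1, x ∉ L.1 := by
      by_contra hc
      push_neg at hc
      exact hKL (Finset.eq_of_subset_of_card_le hc (by rw [K.2, L.2]))
    obtain ⟨x, hxK, hxL⟩ := hex
    have : x ∈ Set.range (K.1.orderEmbOfFin K.2) := by
      rw [Finset.range_orderEmbOfFin]; exact hxK
    obtain ⟨a, ha⟩ := this
    apply Matrix.det_eq_zero_of_row_eq_zero a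
    intro b
    rw [Matrix.submatrix_apply]
    apply Matrix.diagonal_apply_ne
    intro hc
    rw [ha] at hc
    exact hxL (hc ▸ Finset.orderEmbOfFin_mem L.1 L.2 b)

variable {R : Type*} [CommRing R] {n : ℕ}

theorem w_formula (i j : Fin n) (hij : i ≠ j) (a b : R) (hab : a * b = 1) :
    transvection i j a * transvection j i (-b) * transvection i j a
      = 1 - single i i (1 : R) - single j j 1
          + single i j a - single j i b := by
  have h1 : single i j a * single j i (-b) = single i i (a * -b) :=
    single_mul_single_same ..
  have h2 : single j i (-b) * single i j a = single j j (-b * a) :=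
    single_mul_single_same ..
  have h3 : single i j a * single i j a = 0 :=
    single_mul_single_of_ne (h := hij.symm) ..
  have h4 : single i i (a * -b) * single i j a = single i j (a * -b * a) :=
    single_mul_single_same ..
  simp only [Matrix.transvection, Matrix.mul_add, Matrix.add_mul, Matrix.mul_one,
    Matrix.one_mul, h1, h2, h3, h4]
  have ha : a * -b = -1 := by rw [mul_neg, hab]
  have hb : -b * a = -1 := by rw [neg_mul, mul_comm, hab]
  rw [ha, hb]
  have e1 : single i i (-1 : R) = -single i i 1 := by
    rw [← neg_one_smul R (single i i (1:R)), smul_single]; norm_num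
  have e2 : single j j (-1 : R) = -single j j 1 := by
    rw [← neg_one_smul R (single j j (1:R)), smul_single]; norm_num
  have e3 : single i j (-1 * a : R) = -single i j a := by
    rw [← neg_one_smul R (single i j a), smul_single]; norm_num
  have e4 : single j i (-b : R) = -single j i b := by
    rw [← neg_one_smul R (single j i b), smul_single]; norm_num
  rw [e1, e2, e3, e4]
  abel

theorem ww_formula (i j : Fin n) (hij : i ≠ j) (a b : R) :
    (1 - single i i (1 : R) - single j j 1
        + single i j a - single j i b) *
      (1 - single i i (1 : R) - single j j 1
        + single i j (-1) - single j i (-1))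
    = 1 - single i i (1 : R) - single j j 1
        + single i i a + single j j b := by
  simp only [Matrix.mul_sub, Matrix.sub_mul, Matrix.mul_add, Matrix.add_mul,
    Matrix.mul_one, Matrix.one_mul]
  simp only [single_mul_single_same, single_mul_single_of_ne, hij, Ne.symm hij,
    ne_eq, not_false_eq_true, mul_one, one_mul, mul_neg, neg_neg, neg_mul]
  have e1 : single i i (-a : R) = -single i i a := by
    rw [← neg_one_smul R (single i i a), smul_single]; norm_num
  have e2 : single j j (-b : R) = -single j j b := by
    rw [← neg_one_smul R (single j j b), smul_single]; norm_num
  rw [e1, e2]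
  abel

theorem diag_formula (i j : Fin n) (hij : i ≠ j) (a b : R) :
    1 - single i i (1 : R) - single j j 1
        + single i i a + single j j b
      = Matrix.diagonal (fun x => if x = i then a else if x = j then b else 1) := by
  ext x y
  simp only [Matrix.sub_apply, Matrix.add_apply, Matrix.one_apply,
    Matrix.diagonal_apply, Matrix.single, Matrix.of_apply]
  by_cases hxy : x = y
  · subst hxy
    by_cases hxi : i = x
    · have hjx : ¬ j = x := fun h => hij (hxi.trans h.symm)
      simp [hxi, hjx]
    · have hxi' : ¬ x = i := fun h => hxi h.symm
      by_cases hxj : j = x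
      · simp [hxi, hxj, hxi']
      · have hxj' : ¬ x = j := fun h => hxj h.symm
        simp [hxi, hxj, hxi', hxj']
  · have hc1 : ¬(i = x ∧ i = y) := fun h => hxy (h.1.symm.trans h.2)
    have hc2 : ¬(j = x ∧ j = y) := fun h => hxy (h.1.symm.trans h.2)
    simp [hxy, hc1, hc2]

theorem six_formula (i j : Fin n) (hij : i ≠ j) (ε : Rˣ) :
    transvection i j (ε : R) * transvection j i (-(↑ε⁻¹ : R)) * transvection i j (ε : R)
        * transvection i j (-1 : R) * transvection j i (1 : R) * transvection i j (-1 : R)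
      = Matrix.diagonal
          (fun x => if x = i then (ε : R) else if x = j then (↑ε⁻¹ : R) else 1) := by
  have h1 := w_formula i j hij (ε : R) (↑ε⁻¹ : R) (Units.mul_inv ε)
  have h2 := w_formula i j hij (-1 : R) (-1 : R) (by ring)
  rw [neg_neg] at h2
  rw [mul_assoc (transvection i j (ε : R) * transvection j i (-(↑ε⁻¹ : R))
      * transvection i j (ε : R)) (transvection i j (-1 : R)) (transvection j i (1 : R)),
    mul_assoc (transvection i j (ε : R) * transvection j i (-(↑ε⁻¹ : R))
      * transvection i j (ε : R))
      (transvection i j (-1 : R) * transvection j i (1 : R)) (transvection i j (-1 : R)),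
    h1, h2, ww_formula i j hij, diag_formula i j hij]

end ExtAux

/-- for a subgroup `H` of `GL_N(R)` (`N = C(n,m)`) containing
`⋀^m E_n(R)`, the sets `A_{I,J} = {ξ ∈ R : t_{I,J}(ξ) ∈ H}` (for `I ≠ J`)
contain `0`, are closed under addition and negation, and are closed under
multiplication by squares of units of `R`. -/
theorem level_sets_additive (R : Type*) [CommRing R] (n m : ℕ) (hn : 3 ≤ n)
    (H : Subgroup (GL {s : Finset (Fin n) // s.card = m} R))
    (hH : ∀ (i j : Fin n) (ξ : R), i ≠ j →
      ∃ u ∈ H, (u : Matrix {s : Finset (Fin n) // s.card = m}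
          {s : Finset (Fin n) // s.card = m} R) =
        extMatrix R n m (Matrix.transvection i j ξ))
    (I J : {s : Finset (Fin n) // s.card = m}) (hIJ : I ≠ J) :
    (∃ u ∈ H, (u : Matrix _ _ R) = Matrix.transvection I J (0 : R)) ∧
    (∀ ξ ζ : R, (∃ u ∈ H, (u : Matrix _ _ R) = Matrix.transvection I J ξ) →
      (∃ u ∈ H, (u : Matrix _ _ R) = Matrix.transvection I J ζ) →
      ∃ u ∈ H, (u : Matrix _ _ R) = Matrix.transvection I J (ξ + ζ)) ∧
    (∀ ξ : R, (∃ u ∈ H, (u : Matrix _ _ R) = Matrix.transvection I J ξ) →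
      ∃ u ∈ H, (u : Matrix _ _ R) = Matrix.transvection I J (-ξ)) ∧
    (∀ (ε : Rˣ) (ξ : R),
      (∃ u ∈ H, (u : Matrix _ _ R) = Matrix.transvection I J ξ) →
      ∃ u ∈ H, (u : Matrix _ _ R) = Matrix.transvection I J ((ε : R) ^ 2 * ξ)) := by
  refine ⟨⟨1, H.one_mem, by rw [Units.val_one, Matrix.transvection_zero]⟩, ?_, ?_, ?_⟩
  · rintro ξ ζ ⟨u, hu, hu'⟩ ⟨v, hv, hv'⟩
    exact ⟨u * v, H.mul_mem hu hv, by
      rw [Units.val_mul, hu', hv', Matrix.transvection_mul_transvection_same I J hIJ]⟩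
  · rintro ξ ⟨u, hu, hu'⟩
    refine ⟨u⁻¹, H.inv_mem hu, ?_⟩
    have h0 : Matrix.transvection I J ξ * (↑u⁻¹ : Matrix _ _ R) = 1 := by
      rw [← hu', ← Units.val_mul, mul_inv_cancel, Units.val_one]
    calc (↑u⁻¹ : Matrix _ _ R) = 1 * ↑u⁻¹ := (one_mul _).symm
      _ = (Matrix.transvection I J (-ξ) * Matrix.transvection I J ξ) * ↑u⁻¹ := by
          rw [Matrix.transvection_mul_transvection_same I J hIJ, neg_add_cancel,
            Matrix.transvection_zero]
      _ = Matrix.transvection I J (-ξ) * (Matrix.transvection I J ξ * ↑u⁻¹) := by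
          rw [mul_assoc]
      _ = Matrix.transvection I J (-ξ) := by rw [h0, mul_one]
  · rintro ε ξ ⟨u, hu, hu'⟩
    have hIJ' : I.1 ≠ J.1 := fun hc => hIJ (Subtype.ext hc)
    obtain ⟨i, hiI, hiJ⟩ : ∃ x ∈ I.1, x ∉ J.1 := by
      by_contra hc; push_neg at hc
      exact hIJ' (Finset.eq_of_subset_of_card_le hc (by rw [I.2, J.2]))
    obtain ⟨j, hjJ, hjI⟩ : ∃ x ∈ J.1, x ∉ I.1 := by
      by_contra hc; push_neg at hc
      exact hIJ' ((Finset.eq_of_subset_of_card_le hc (by rw [J.2, I.2])).symm)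
    have hij : i ≠ j := fun hc => hiJ (hc ▸ hjJ)
    obtain ⟨c1, hc1, e1⟩ := hH i j ((ε : R)) hij
    obtain ⟨c2, hc2, e2⟩ := hH j i (-(↑ε⁻¹ : R)) hij.symm
    obtain ⟨c4, hc4, e4⟩ := hH i j ((-1 : R)) hij
    obtain ⟨c5, hc5, e5⟩ := hH j i ((1 : R)) hij.symm
    obtain ⟨b1, hb1, f1⟩ := hH i j ((↑ε⁻¹ : R)) hij
    obtain ⟨b2, hb2, f2⟩ := hH j i (-(ε : R)) hij.symm
    have hcval : (↑(c1 * c2 * c1 * c4 * c5 * c4) : Matrix _ _ R)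
        = Matrix.diagonal (fun K : {s : Finset (Fin n) // s.card = m} =>
            ∏ x ∈ K.1, (if x = i then (ε : R) else if x = j then (↑ε⁻¹ : R) else 1)) := by
      rw [Units.val_mul, Units.val_mul, Units.val_mul, Units.val_mul, Units.val_mul,
        e1, e2, e4, e5, ← extMatrix_mul, ← extMatrix_mul, ← extMatrix_mul,
        ← extMatrix_mul, ← extMatrix_mul, six_formula i j hij ε, extMatrix_diagonal]
    have hs2 := six_formula i j hij ε⁻¹
    rw [inv_inv] at hs2
    have hc'val : (↑(b1 * b2 * b1 * c4 * c5 * c4) : Matrix _ _ R)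
        = Matrix.diagonal (fun K : {s : Finset (Fin n) // s.card = m} =>
            ∏ x ∈ K.1, (if x = i then (↑ε⁻¹ : R) else if x = j then (ε : R) else 1)) := by
      rw [Units.val_mul, Units.val_mul, Units.val_mul, Units.val_mul, Units.val_mul,
        f1, f2, e4, e5, ← extMatrix_mul, ← extMatrix_mul, ← extMatrix_mul,
        ← extMatrix_mul, ← extMatrix_mul, hs2, extMatrix_diagonal]
    set D1 : {s : Finset (Fin n) // s.card = m} → R := fun K =>
      ∏ x ∈ K.1, (if x = i then (ε : R) else if x = j then (↑ε⁻¹ : R) else 1) with hD1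
    set D2 : {s : Finset (Fin n) // s.card = m} → R := fun K =>
      ∏ x ∈ K.1, (if x = i then (↑ε⁻¹ : R) else if x = j then (ε : R) else 1) with hD2
    have hprod : ∀ K : {s : Finset (Fin n) // s.card = m}, D1 K * D2 K = 1 := by
      intro K
      simp only [hD1, hD2]
      rw [← Finset.prod_mul_distrib]
      apply Finset.prod_eq_one
      intro x _
      by_cases hxi : x = i
      · simp [hxi, Units.mul_inv]
      · by_cases hxj : x = j <;> simp [hxi, hxj, hij.symm, Units.inv_mul]
    have hD1I : D1 I = (ε : R) := by
      simp only [hD1]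
      rw [Finset.prod_eq_single i ?_ ?_]
      · simp
      · intro b hb hbi
        have hbj : b ≠ j := fun h => hjI (h ▸ hb)
        simp [hbi, hbj]
      · intro h; exact absurd hiI h
    have hD2J : D2 J = (ε : R) := by
      simp only [hD2]
      rw [Finset.prod_eq_single j ?_ ?_]
      · simp [hij.symm]
      · intro b hb hbj
        have hbi : b ≠ i := fun h => hiJ (h ▸ hb)
        simp [hbi, hbj]
      · intro h; exact absurd hjJ h
    refine ⟨(c1 * c2 * c1 * c4 * c5 * c4) * u * (b1 * b2 * b1 * c4 * c5 * c4),
      H.mul_mem (H.mul_mem (H.mul_mem (H.mul_mem (H.mul_mem (H.mul_mem (H.mul_mem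
        hc1 hc2) hc1) hc4) hc5) hc4) hu) (H.mul_mem (H.mul_mem (H.mul_mem (H.mul_mem
        (H.mul_mem hb1 hb2) hb1) hc4) hc5) hc4), ?_⟩
    rw [Units.val_mul, Units.val_mul, hcval, hc'val, hu']
    ext K L
    rw [Matrix.mul_diagonal, Matrix.diagonal_mul]
    simp only [Matrix.transvection, Matrix.add_apply, Matrix.one_apply,
      Matrix.single, Matrix.of_apply]
    split_ifs with h1 h2 h3
    · exact absurd (h2.1.trans (h1.trans h2.2.symm)) hIJ
    · subst h1
      simp only [add_zero, zero_add, mul_one]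
      exact hprod K
    · obtain ⟨rfl, rfl⟩ := h3
      simp only [add_zero, zero_add]
      rw [hD1I, hD2J]
      ring
    · simp
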